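/- The quantum Radon transform of any function vanishes on even slopes: for every even k ∈ [0,2n) and every l ∈ [0,2n), QR_f(l,k) = 0. -/
import Mathlib


/-- The symmetrized double-sized extension `f̃` of `f`, defined on `[0,2n)²` by
`f̃(x',y') = (1/2)·(−1)^(⌊x'/n⌋+⌊y'/n⌋)·f(x' mod n, y' mod n)`. -/
noncomputable def ftilde (n : ℕ) (f : ZMod n × ZMod n → ℝ) (x y : ℕ) : ℝ :=
  (1 / 2) * (-1 : ℝ) ^ (x / n + y / n) * f (x, y)

/-- The quantum Radon transform
`QR_f(l,k) = (1/√(2n))·Σ_{(x',y') ∈ [0,2n)², x'+k·y' ≡ l mod 2n} f̃(x',y')`. -/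
noncomputable def QRT (n : ℕ) (f : ZMod n × ZMod n → ℝ) (l k : ℕ) : ℝ :=
  (1 / Real.sqrt (2 * n)) * ∑ x ∈ Finset.range (2 * n), ∑ y ∈ Finset.range (2 * n),
    if (x + k * y) % (2 * n) = l % (2 * n) then ftilde n f x y else 0

lemma ftilde_shift (n : ℕ) (hn : 0 < n) (f : ZMod n × ZMod n → ℝ) (x y : ℕ) :
    ftilde n f x (n + y) = -ftilde n f x y := by
  unfold ftilde
  have h1 : (n + y) / n = y / n + 1 := by
    rw [add_comm, Nat.add_div_right _ hn]
  have h2 : ((n + y : ℕ) : ZMod n) = (y : ℕ) := by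
    push_cast
    simp
  rw [h1, h2, ← add_assoc, pow_succ]
  ring

/-- The quantum Radon transform of any function vanishes on even slopes:
for every even `k ∈ [0,2n)` and every `l ∈ [0,2n)`, `QR_f(l,k) = 0`. -/
theorem qrt_vanishes_even_slope (n : ℕ) (hn : 0 < n) (f : ZMod n × ZMod n → ℝ)
    (l k : ℕ) (hl : l < 2 * n) (hk : k < 2 * n) (hkeven : Even k) :
    QRT n f l k = 0 := by
  unfold QRT
  obtain ⟨m, hm⟩ := hkeven
  have hinner : ∀ x, ∑ y ∈ Finset.range (2 * n),
      (if (x + k * y) % (2 * n) = l % (2 * n) then ftilde n f x y else 0) = 0 := by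
    intro x
    rw [two_mul, Finset.sum_range_add, ← Finset.sum_add_distrib]
    apply Finset.sum_eq_zero
    intro y _
    have hcond : (x + k * (n + y)) % (n + n) = (x + k * y) % (n + n) := by
      have : x + k * (n + y) = x + k * y + m * (n + n) := by
        rw [hm]; ring
      rw [this, Nat.add_mul_mod_self_right]
    rw [hcond, ftilde_shift n hn f x y]
    split <;> simp
  rw [Finset.sum_congr rfl (fun x _ => hinner x), Finset.sum_const_zero, mul_zero]
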